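/- Let K ⊂ ℝ^d be nonempty compact and let ψ be a feedforward neural network with depth L ∈ ℕ, widths w_i ∈ ℕ, and continuous activation functions σ_i. Suppose each σ_i, i = 1,…,L, is affine and nonconstant on some nonempty open interval I_i ⊂ ℝ, and suppose L: C(K) × C(K) → ℝ and y_T ∈ C(K) are such that the problem of minimizing L(z_{a,c}, y_T) over (a,c) ∈ ℝ^d × ℝ, where z_{a,c}(x) = aᵀx + c, has a global solution. Then there exists a set E ⊂ D with Hausdorff dimension dim_H(E) ≥ m − d − 1 such that every element of E is a local minimum of the training problem (P) and L(Ψ(α), y_T) = min_{(a,c) ∈ ℝ^d × ℝ} L(z_{a,c}, y_T) holds for all α ∈ E. -/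

import Mathlib

open scoped BigOperators ENNReal NNReal

/-- Parameter space `D` of a feedforward network with `L` hidden layers and width
function `w` (`w 0 = d` is the input dimension, hidden layer `i` has width `w i` for
`i = 1, …, L`, and the output layer has width one). The component for `i : Fin L`
consists of the weight matrix `A_{i+1}` and the bias vector `b_{i+1}`; the last
component consists of the output weights `A_{L+1}` and the output bias `b_{L+1}`. -/
abbrev Params (w : ℕ → ℕ) (L : ℕ) : Type :=
  (∀ i : Fin L, ((Fin (w (i + 1)) → Fin (w i) → ℝ) × (Fin (w (i + 1)) → ℝ))) ×
    ((Fin (w L) → ℝ) × ℝ)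

/-- The number of degrees of freedom `m = Σ_{i=1}^{L+1} w_i (w_{i-1} + 1)` of the
network (with `w_{L+1} = 1`). -/
def mdim (w : ℕ → ℕ) (L : ℕ) : ℕ :=
  (∑ i ∈ Finset.range L, w (i + 1) * (w i + 1)) + (w L + 1)

/-- Output of the first `k` hidden layers of the network. -/
noncomputable def hiddenOut (σ : ℕ → ℝ → ℝ) (w : ℕ → ℕ) (L : ℕ)
    (θ : ∀ i : Fin L, ((Fin (w (i + 1)) → Fin (w i) → ℝ) × (Fin (w (i + 1)) → ℝ))) :
    ∀ k : ℕ, k ≤ L → (Fin (w 0) → ℝ) → Fin (w k) → ℝ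
  | 0, _, x => x
  | k + 1, h, x => fun i =>
      σ (k + 1)
        ((∑ j, (θ ⟨k, h⟩).1 i j * hiddenOut σ w L θ k (Nat.le_of_succ_le h) x j) +
          (θ ⟨k, h⟩).2 i)

/-- The scalar output `ψ(α, x)` of the feedforward network. -/
noncomputable def netFun (σ : ℕ → ℝ → ℝ) (w : ℕ → ℕ) (L : ℕ) (α : Params w L)
    (x : Fin (w 0) → ℝ) : ℝ :=
  (∑ j, α.2.1 j * hiddenOut σ w L α.1 L le_rfl x j) + α.2.2

lemma continuous_hiddenOut {σ : ℕ → ℝ → ℝ} {w : ℕ → ℕ} {L : ℕ}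
    (hσ : ∀ i, 1 ≤ i → i ≤ L → Continuous (σ i))
    (θ : ∀ i : Fin L, ((Fin (w (i + 1)) → Fin (w i) → ℝ) × (Fin (w (i + 1)) → ℝ))) :
    ∀ (k : ℕ) (h : k ≤ L), Continuous fun x => hiddenOut σ w L θ k h x := by
  intro k
  induction k with
  | zero =>
      intro h
      refine (continuous_id : Continuous fun x : Fin (w 0) → ℝ => x).congr ?_
      intro x
      simp [hiddenOut]
  | succ k ih =>
      intro h
      apply continuous_pi
      intro i
      simp only [hiddenOut]
      exact (hσ (k + 1) (Nat.succ_le_succ (Nat.zero_le _)) h).comp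
        ((continuous_finset_sum _ fun j _ =>
          continuous_const.mul ((continuous_apply j).comp (ih (Nat.le_of_succ_le h)))).add
          continuous_const)

lemma continuous_netFun {σ : ℕ → ℝ → ℝ} {w : ℕ → ℕ} {L : ℕ}
    (hσ : ∀ i, 1 ≤ i → i ≤ L → Continuous (σ i)) (α : Params w L) :
    Continuous fun x => netFun σ w L α x := by
  unfold netFun
  exact (continuous_finset_sum _ fun j _ =>
    continuous_const.mul
      ((continuous_apply j).comp (continuous_hiddenOut hσ α.1 L le_rfl))).add continuous_const

/-- The parameter-to-realization map `Ψ : D → C(K)`. -/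
noncomputable def Psi (σ : ℕ → ℝ → ℝ) (w : ℕ → ℕ) (L : ℕ)
    (hσ : ∀ i, 1 ≤ i → i ≤ L → Continuous (σ i)) (K : Set (Fin (w 0) → ℝ))
    (α : Params w L) : C(K, ℝ) :=
  ⟨fun x => netFun σ w L α x, (continuous_netFun hσ α).comp continuous_subtype_val⟩

/-- The affine function `z_{a,c} : x ↦ aᵀ x + c` as an element of `C(K)`. -/
noncomputable def affineCM {n : ℕ} (K : Set (Fin n → ℝ)) (a : Fin n → ℝ) (c : ℝ) :
    C(K, ℝ) :=
  ⟨fun x => (∑ j, a j * (x : Fin n → ℝ) j) + c,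
    (continuous_finset_sum _ fun j _ =>
      continuous_const.mul ((continuous_apply j).comp continuous_subtype_val)).add
      continuous_const⟩

/-- The constant function `z_c : x ↦ c` as an element of `C(K)`. -/
noncomputable def constCM {n : ℕ} (K : Set (Fin n → ℝ)) (c : ℝ) : C(K, ℝ) :=
  ⟨fun _ => c, continuous_const⟩

/-- A function `ℝ → ℝ` is nonpolynomial if it is not the restriction of a polynomial. -/
def IsNonpolynomial (σ : ℝ → ℝ) : Prop :=
  ¬ ∃ p : Polynomial ℝ, ∀ x : ℝ, σ x = p.eval x

/-- `𝓛` is Gâteaux differentiable in its first argument at `(v, y)` with partial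
derivative (identified with an element of `M(K) = C(K)*`) given by the continuous
linear functional `T`. -/
def HasGateauxDerivFirst {n : ℕ} {K : Set (Fin n → ℝ)}
    (𝓛 : C(K, ℝ) → C(K, ℝ) → ℝ) (v y : C(K, ℝ)) (T : C(K, ℝ) →L[ℝ] ℝ) : Prop :=
  ∀ h : C(K, ℝ), Filter.Tendsto (fun s : ℝ => (𝓛 (v + s • h) y - 𝓛 v y) / s)
    (nhdsWithin 0 (Set.Ioi 0)) (nhds (T h))

/-!
On the open set of parameters for which every pre-activation, at every input in `K`, lies in the
interval where its activation is affine, the network realizes an affine function `z_{a,c}`. So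
every such parameter realizing an optimal `z_{a₀,c₀}` is a local minimum with the optimal value.

There `a = A₁ᵀ r` and `c = b_{L+1} + c'`, where neither `r` nor `c'` involves `A₁` or `b_{L+1}`.
Where `r_{j₀} ≠ 0`, the equations `a = a₀`, `c = c₀` are solved by adjusting only row `j₀` of `A₁`
and `b_{L+1}` (the pivot coordinates). Near a solution this exhibits the solution set as a graph
over an open set in the remaining `m - d - 1` coordinates, whose projection back onto those
coordinates is Lipschitz and onto; this gives the dimension bound.
-/

open Set Module Matrix

section HausdorffDimension

variable {V W F : Type*} [NormedAddCommGroup V] [NormedSpace ℝ V] [FiniteDimensional ℝ V]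

theorem finrank_le_dimH_image_of_comp_eq [NormedAddCommGroup W] [NormedSpace ℝ W]
    [FiniteDimensional ℝ W] (P : V →ₗ[ℝ] W) (hP : Function.Surjective P) {O : Set V}
    (hO : IsOpen O) (hne : O.Nonempty) {Φ : V → V} (hΦ : ∀ ξ ∈ O, P (Φ ξ) = P ξ) :
    (finrank ℝ W : ℝ≥0∞) ≤ dimH (Φ '' O) := by
  have hPO : P '' (Φ '' O) = P '' O := by
    rw [image_image]
    exact image_congr hΦ
  have hint : (interior (P '' O)).Nonempty := by
    rw [(P.isOpenMap_of_finiteDimensional hP O hO).interior_eq]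
    exact hne.image P
  calc (finrank ℝ W : ℝ≥0∞) = dimH (P '' (Φ '' O)) := by
        rw [hPO, Real.dimH_of_nonempty_interior hint]
    _ ≤ dimH (Φ '' O) := (LinearMap.toContinuousLinearMap P).lipschitz.dimH_image_le _

theorem finrank_sub_finrank_le_dimH_image_add [AddCommGroup F] [Module ℝ F] [FiniteDimensional ℝ F]
    (q : V →ₗ[ℝ] F) (e : F →ₗ[ℝ] V) (hqe : ∀ y, q (e y) = y) {O : Set V} (hO : IsOpen O)
    (hne : O.Nonempty) (g : V → F) :
    ((finrank ℝ V - finrank ℝ F : ℕ) : ℝ≥0∞) ≤ dimH ((fun ξ => ξ + e (g ξ)) '' O) := by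
  let P : V →ₗ[ℝ] LinearMap.ker q :=
    (LinearMap.id - e ∘ₗ q).codRestrict _ fun ξ => by simp [hqe]
  have hP : Function.Surjective P := fun ζ =>
    ⟨ζ, Subtype.ext (by simp [P, LinearMap.mem_ker.mp ζ.2])⟩
  have hrank : finrank ℝ V - finrank ℝ F ≤ finrank ℝ (LinearMap.ker q) := by
    have := q.finrank_range_add_finrank_ker
    have := Submodule.finrank_le (LinearMap.range q)
    omega
  refine le_trans (by exact_mod_cast hrank)
    (finrank_le_dimH_image_of_comp_eq P hP hO hne fun ξ _ => ?_)
  ext1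
  simp [P, hqe]

end HausdorffDimension

section AffineRegime

variable {σ : ℕ → ℝ → ℝ} {w : ℕ → ℕ} {L : ℕ}

abbrev HiddenParams (w : ℕ → ℕ) (L : ℕ) : Type :=
  ∀ i : Fin L, ((Fin (w (i + 1)) → Fin (w i) → ℝ) × (Fin (w (i + 1)) → ℝ))

-- Typed as a `Matrix` so that matrix products elaborate.
abbrev weight (θ : HiddenParams w L) (k : Fin L) : Matrix (Fin (w (k + 1))) (Fin (w k)) ℝ :=
  (θ k).1

noncomputable def preact (σ : ℕ → ℝ → ℝ) (θ : HiddenParams w L) (k : Fin L)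
    (x : Fin (w 0) → ℝ) : Fin (w (k + 1)) → ℝ :=
  weight θ k *ᵥ hiddenOut σ w L θ k k.isLt.le x + (θ k).2

theorem hiddenOut_succ (θ : HiddenParams w L) (k : ℕ) (h : k < L) (x : Fin (w 0) → ℝ)
    (i : Fin (w (k + 1))) :
    hiddenOut σ w L θ (k + 1) h x i = σ (k + 1) (preact σ θ ⟨k, h⟩ x i) :=
  rfl

def affineRegime (σ : ℕ → ℝ → ℝ) (s t : ℕ → ℝ) (K : Set (Fin (w 0) → ℝ)) :
    Set (HiddenParams w L) :=
  {θ | ∀ x ∈ K, ∀ (k : Fin L) i, preact σ θ k x i ∈ Ioo (s (k + 1)) (t (k + 1))}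

theorem continuous_hiddenOut_uncurry (hσ : ∀ i, 1 ≤ i → i ≤ L → Continuous (σ i)) :
    ∀ (k : ℕ) (h : k ≤ L),
      Continuous fun p : HiddenParams w L × (Fin (w 0) → ℝ) => hiddenOut σ w L p.1 k h p.2
  | 0, _ => continuous_snd
  | k + 1, h => by
      have := continuous_hiddenOut_uncurry hσ k (by omega)
      exact continuous_pi fun i => (hσ (k + 1) (by omega) h).comp (by fun_prop)

theorem isOpen_affineRegime (hσ : ∀ i, 1 ≤ i → i ≤ L → Continuous (σ i)) (s t : ℕ → ℝ)
    {K : Set (Fin (w 0) → ℝ)} (hK : IsCompact K) :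
    IsOpen (affineRegime σ s t K : Set (HiddenParams w L)) := by
  refine isOpen_iff_mem_nhds.mpr fun θ hθ => hK.eventually_forall_of_forall_eventually
    fun x hx => ?_
  simp only [Filter.eventually_all]
  intro k i
  have := continuous_hiddenOut_uncurry (w := w) hσ k k.isLt.le
  have hcont : Continuous fun p : HiddenParams w L × (Fin (w 0) → ℝ) => preact σ p.1 k p.2 i := by
    unfold preact
    fun_prop
  exact hcont.continuousAt.eventually_mem (isOpen_Ioo.mem_nhds (hθ x hx k i))

end AffineRegime

section Linearization

variable {σ : ℕ → ℝ → ℝ} {w : ℕ → ℕ} {L : ℕ} (β γ : ℕ → ℝ)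

/-- The first-layer weights `A₁` are kept out of `linWeight` and `linBias`, so that both depend
only on the biases `b₁` and the layers above. -/
noncomputable def linWeight (θ : HiddenParams w L) :
    (k : ℕ) → k < L → Matrix (Fin (w (k + 1))) (Fin (w 1)) ℝ
  | 0, _ => β 1 • 1
  | k + 1, h => β (k + 2) • (weight θ ⟨k + 1, h⟩ * linWeight θ k (by omega))

noncomputable def linBias (θ : HiddenParams w L) : (k : ℕ) → k < L → Fin (w (k + 1)) → ℝ
  | 0, h => fun i => β 1 * (θ ⟨0, h⟩).2 i + γ 1
  | k + 1, h => fun i =>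
      β (k + 2) * ((weight θ ⟨k + 1, h⟩ *ᵥ linBias θ k (by omega)) i + (θ ⟨k + 1, h⟩).2 i) +
        γ (k + 2)

variable {β γ}

theorem hiddenOut_eq_linWeight_mulVec_add {s t : ℕ → ℝ}
    (hσ_aff : ∀ i, 1 ≤ i → i ≤ L → ∀ y ∈ Ioo (s i) (t i), σ i y = β i * y + γ i)
    {θ : HiddenParams w L} {x : Fin (w 0) → ℝ}
    (hx : ∀ (k : Fin L) i, preact σ θ k x i ∈ Ioo (s (k + 1)) (t (k + 1))) :
    ∀ (k : ℕ) (h : k < L), hiddenOut σ w L θ (k + 1) h x =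
      linWeight β θ k h *ᵥ (weight θ ⟨0, by omega⟩ *ᵥ x) + linBias β γ θ k h
  | 0, h => by
      ext i
      rw [hiddenOut_succ, hσ_aff 1 le_rfl h _ (hx ⟨0, h⟩ i)]
      simp only [preact, hiddenOut, Pi.add_apply, linWeight, smul_mulVec, Matrix.one_mulVec,
        linBias, Pi.smul_apply, smul_eq_mul]
      ring
  | k + 1, h => by
      ext i
      rw [hiddenOut_succ, hσ_aff (k + 2) (by omega) h _ (hx ⟨k + 1, h⟩ i)]
      simp only [preact, hiddenOut_eq_linWeight_mulVec_add hσ_aff hx k (by omega)]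
      simp only [mulVec_add, Pi.add_apply, linWeight, smul_mulVec, ← mulVec_mulVec, linBias,
        Pi.smul_apply, smul_eq_mul]
      ring

theorem linWeight_congr {θ θ' : HiddenParams w L}
    (hθ : ∀ k : Fin L, (k : ℕ) ≠ 0 → θ k = θ' k) :
    ∀ (k : ℕ) (h : k < L), linWeight β θ k h = linWeight β θ' k h
  | 0, _ => rfl
  | k + 1, h => by
      simp only [linWeight, weight, hθ ⟨k + 1, h⟩ (by simp), linWeight_congr hθ k]

theorem linBias_congr {θ θ' : HiddenParams w L}
    (hθ : ∀ k : Fin L, (k : ℕ) ≠ 0 → θ k = θ' k) (hb : ∀ h : 0 < L, (θ ⟨0, h⟩).2 = (θ' ⟨0, h⟩).2) :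
    ∀ (k : ℕ) (h : k < L), linBias β γ θ k h = linBias β γ θ' k h
  | 0, h => by simp only [linBias, hb h]
  | k + 1, h => by
      simp only [linBias, weight, hθ ⟨k + 1, h⟩ (by simp), linBias_congr hθ hb k]

theorem continuous_linWeight : ∀ (k : ℕ) (h : k < L),
    Continuous fun θ : HiddenParams w L => linWeight β θ k h
  | 0, _ => continuous_const
  | k + 1, h => by
      have := continuous_linWeight k (by omega)
      simp only [linWeight]
      fun_prop

theorem continuous_linBias : ∀ (k : ℕ) (h : k < L),
    Continuous fun θ : HiddenParams w L => linBias β γ θ k h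
  | 0, h => by simp only [linBias]; fun_prop
  | k + 1, h => by
      have := continuous_linBias k (by omega)
      simp only [linBias]
      fun_prop

theorem sum_linWeight_ne_zero (hβ : ∀ i, 1 ≤ i → i ≤ L → β i ≠ 0)
    (hw : ∀ i, 1 ≤ i → i ≤ L → 0 < w i) {θ : HiddenParams w L} {e : ℝ} (he : e ≠ 0)
    (hθ : ∀ k : Fin L, (k : ℕ) ≠ 0 → ∀ a b, (θ k).1 a b = e) :
    ∀ (k : ℕ) (h : k < L) (j : Fin (w 1)), ∑ i, linWeight β θ k h i j ≠ 0
  | 0, h, j => by simpa [linWeight, Matrix.one_apply] using hβ 1 le_rfl h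
  | k + 1, h, j => by
      have hθk := hθ ⟨k + 1, h⟩ (by simp)
      simp only [linWeight, Matrix.smul_apply, Matrix.mul_apply, hθk, ← Finset.mul_sum,
        Finset.sum_const, Finset.card_univ, Fintype.card_fin, nsmul_eq_mul, smul_eq_mul]
      exact mul_ne_zero (hβ (k + 2) (by omega) h) <| mul_ne_zero he <|
        mul_ne_zero (Nat.cast_ne_zero.mpr (hw (k + 2) (by omega) h).ne')
          (sum_linWeight_ne_zero hβ hw he hθ k _ j)

end Linearization

section AffineCoefficients

variable {σ : ℕ → ℝ → ℝ} {w : ℕ → ℕ} {L : ℕ} (β γ : ℕ → ℝ)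

noncomputable def linGain (α : Params w (L + 1)) : Fin (w 1) → ℝ :=
  α.2.1 ᵥ* linWeight β α.1 L L.lt_succ_self

noncomputable def linSlope (α : Params w (L + 1)) : Fin (w 0) → ℝ :=
  linGain β α ᵥ* weight α.1 ⟨0, L.succ_pos⟩

noncomputable def linOffset (α : Params w (L + 1)) : ℝ :=
  α.2.1 ⬝ᵥ linBias β γ α.1 L L.lt_succ_self + α.2.2

variable {β γ}

theorem netFun_eq_linSlope_dotProduct_add {s t : ℕ → ℝ}
    (hσ_aff : ∀ i, 1 ≤ i → i ≤ L + 1 → ∀ y ∈ Ioo (s i) (t i), σ i y = β i * y + γ i)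
    {α : Params w (L + 1)} {x : Fin (w 0) → ℝ}
    (hx : ∀ (k : Fin (L + 1)) i, preact σ α.1 k x i ∈ Ioo (s (k + 1)) (t (k + 1))) :
    netFun σ w (L + 1) α x = linSlope β α ⬝ᵥ x + linOffset β γ α := by
  change α.2.1 ⬝ᵥ hiddenOut σ w (L + 1) α.1 (L + 1) le_rfl x + α.2.2 = _
  rw [hiddenOut_eq_linWeight_mulVec_add hσ_aff hx L L.lt_succ_self, dotProduct_add,
    Matrix.dotProduct_mulVec, Matrix.dotProduct_mulVec, add_assoc]
  rfl

theorem Psi_eq_affineCM {s t : ℕ → ℝ} (hσ : ∀ i, 1 ≤ i → i ≤ L + 1 → Continuous (σ i))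
    (hσ_aff : ∀ i, 1 ≤ i → i ≤ L + 1 → ∀ y ∈ Ioo (s i) (t i), σ i y = β i * y + γ i)
    {K : Set (Fin (w 0) → ℝ)} {α : Params w (L + 1)} (hα : α.1 ∈ affineRegime σ s t K) :
    Psi σ w (L + 1) hσ K α = affineCM K (linSlope β α) (linOffset β γ α) :=
  ContinuousMap.ext fun x => netFun_eq_linSlope_dotProduct_add hσ_aff (hα x x.2)

theorem continuous_linGain (j : Fin (w 1)) :
    Continuous fun α : Params w (L + 1) => linGain β α j := by
  have := continuous_linWeight (β := β) (w := w) L L.lt_succ_self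
  unfold linGain
  fun_prop

theorem continuous_linSlope : Continuous fun α : Params w (L + 1) => linSlope β α := by
  have := continuous_linWeight (β := β) (w := w) L L.lt_succ_self
  unfold linSlope linGain
  fun_prop

theorem continuous_linOffset : Continuous fun α : Params w (L + 1) => linOffset β γ α := by
  have := continuous_linBias (β := β) (γ := γ) (w := w) L L.lt_succ_self
  unfold linOffset
  fun_prop

end AffineCoefficients

section Pivot

variable {w : ℕ → ℕ} {L : ℕ} {β γ : ℕ → ℝ}

def pivotEmbed (j₀ : Fin (w 1)) : ((Fin (w 0) → ℝ) × ℝ) →ₗ[ℝ] Params w (L + 1) where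
  toFun y := (Pi.single ⟨0, L.succ_pos⟩ (Pi.single j₀ y.1, 0), (0, y.2))
  map_add' y z := by
    simp only [Prod.fst_add, Prod.snd_add, Prod.mk_add_mk, add_zero]
    rw [← Pi.single_add, Prod.mk_add_mk, add_zero, Pi.single_add]
  map_smul' c y := by
    simp only [Prod.smul_fst, Prod.smul_snd, Prod.smul_mk, smul_zero, RingHom.id_apply]
    rw [← Pi.single_smul, Prod.smul_mk, smul_zero, Pi.single_smul]

def pivotCoords (j₀ : Fin (w 1)) : Params w (L + 1) →ₗ[ℝ] (Fin (w 0) → ℝ) × ℝ where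
  toFun α := (weight α.1 ⟨0, L.succ_pos⟩ j₀, α.2.2)
  map_add' _ _ := rfl
  map_smul' _ _ := rfl

theorem pivotCoords_pivotEmbed (j₀ : Fin (w 1)) (y : (Fin (w 0) → ℝ) × ℝ) :
    pivotCoords (L := L) j₀ (pivotEmbed j₀ y) = y := by
  simp only [pivotCoords, pivotEmbed, weight, LinearMap.coe_mk, AddHom.coe_mk]
  rw [Pi.single_eq_same]
  exact Prod.ext (Pi.single_eq_same (M := fun _ => Fin (w 0) → ℝ) j₀ y.1) rfl

theorem fst_add_pivotEmbed (α : Params w (L + 1)) (j₀ : Fin (w 1)) (y : (Fin (w 0) → ℝ) × ℝ) :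
    (α + pivotEmbed j₀ y).1 = α.1 + (pivotEmbed j₀ (y.1, 0)).1 :=
  rfl

theorem add_pivotEmbed_fst_of_ne (α : Params w (L + 1)) (j₀ : Fin (w 1))
    (y : (Fin (w 0) → ℝ) × ℝ) {k : Fin (L + 1)} (hk : (k : ℕ) ≠ 0) :
    (α + pivotEmbed j₀ y).1 k = α.1 k := by
  have hk' : k ≠ ⟨0, L.succ_pos⟩ := fun h => hk (congrArg Fin.val h)
  simp only [Prod.fst_add, Pi.add_apply, pivotEmbed, LinearMap.coe_mk, AddHom.coe_mk]
  rw [Pi.single_eq_of_ne hk', add_zero]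

theorem add_pivotEmbed_fst_zero (α : Params w (L + 1)) (j₀ : Fin (w 1))
    (y : (Fin (w 0) → ℝ) × ℝ) :
    (α + pivotEmbed j₀ y).1 ⟨0, L.succ_pos⟩ = α.1 ⟨0, L.succ_pos⟩ + (Pi.single j₀ y.1, 0) := by
  simp only [Prod.fst_add, Pi.add_apply, pivotEmbed, LinearMap.coe_mk, AddHom.coe_mk]
  rw [Pi.single_eq_same]

theorem linGain_add_pivotEmbed (α : Params w (L + 1)) (j₀ : Fin (w 1))
    (y : (Fin (w 0) → ℝ) × ℝ) : linGain β (α + pivotEmbed j₀ y) = linGain β α := by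
  unfold linGain
  rw [linWeight_congr fun k hk => add_pivotEmbed_fst_of_ne α j₀ y hk]
  simp [pivotEmbed]

theorem linSlope_add_pivotEmbed (α : Params w (L + 1)) (j₀ : Fin (w 1))
    (y : (Fin (w 0) → ℝ) × ℝ) :
    linSlope β (α + pivotEmbed j₀ y) = linSlope β α + linGain β α j₀ • y.1 := by
  ext i
  simp only [linSlope, linGain_add_pivotEmbed, weight, add_pivotEmbed_fst_zero, Matrix.vecMul,
    dotProduct, Prod.fst_add, Pi.add_apply, mul_add, Finset.sum_add_distrib, Pi.smul_apply,
    smul_eq_mul]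
  simp [Pi.single_apply, apply_ite (fun f : Fin (w 0) → ℝ => f i)]

theorem linOffset_add_pivotEmbed (α : Params w (L + 1)) (j₀ : Fin (w 1))
    (y : (Fin (w 0) → ℝ) × ℝ) :
    linOffset β γ (α + pivotEmbed j₀ y) = linOffset β γ α + y.2 := by
  unfold linOffset
  rw [linBias_congr (fun k hk => add_pivotEmbed_fst_of_ne α j₀ y hk)
    fun _ => by rw [add_pivotEmbed_fst_zero, Prod.snd_add, add_zero]]
  show (α.2.1 + 0) ⬝ᵥ _ + (α.2.2 + y.2) = _
  rw [add_zero, add_assoc]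

end Pivot

section PivotCorrection

variable {w : ℕ → ℕ} {L : ℕ} {β γ : ℕ → ℝ}

variable (β γ) in
noncomputable def pivotCorrection (j₀ : Fin (w 1)) (a₀ : Fin (w 0) → ℝ) (c₀ : ℝ)
    (α : Params w (L + 1)) : (Fin (w 0) → ℝ) × ℝ :=
  ((linGain β α j₀)⁻¹ • (a₀ - linSlope β α), c₀ - linOffset β γ α)

theorem linSlope_add_pivotCorrection {j₀ : Fin (w 1)} (a₀ : Fin (w 0) → ℝ) (c₀ : ℝ)
    {α : Params w (L + 1)} (hα : linGain β α j₀ ≠ 0) :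
    linSlope β (α + pivotEmbed j₀ (pivotCorrection β γ j₀ a₀ c₀ α)) = a₀ := by
  rw [linSlope_add_pivotEmbed, pivotCorrection, smul_inv_smul₀ hα, add_sub_cancel]

theorem linOffset_add_pivotCorrection (j₀ : Fin (w 1)) (a₀ : Fin (w 0) → ℝ) (c₀ : ℝ)
    (α : Params w (L + 1)) :
    linOffset β γ (α + pivotEmbed j₀ (pivotCorrection β γ j₀ a₀ c₀ α)) = c₀ := by
  rw [linOffset_add_pivotEmbed, pivotCorrection, add_sub_cancel]

theorem continuousOn_add_pivotCorrection (j₀ : Fin (w 1)) (a₀ : Fin (w 0) → ℝ) (c₀ : ℝ) :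
    ContinuousOn (fun α : Params w (L + 1) => α + pivotEmbed j₀ (pivotCorrection β γ j₀ a₀ c₀ α))
      {α | linGain β α j₀ ≠ 0} := by
  have he := (pivotEmbed (L := L) j₀).continuous_of_finiteDimensional
  refine continuousOn_id.add (he.comp_continuousOn (ContinuousOn.prodMk ?_ ?_))
  · exact ((continuous_linGain j₀).continuousOn.inv₀ fun _ h => h).smul
      (continuous_const.sub continuous_linSlope).continuousOn
  · exact (continuous_const.sub continuous_linOffset).continuousOn

end PivotCorrection

theorem IsOpen.exists_ne_zero_add_smul_mem {E : Type*} [AddCommGroup E] [Module ℝ E]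
    [TopologicalSpace E] [ContinuousAdd E] [ContinuousSMul ℝ E] {U : Set E} (hU : IsOpen U)
    {x : E} (hx : x ∈ U) (v : E) : ∃ δ : ℝ, δ ≠ 0 ∧ x + δ • v ∈ U := by
  have hcont : Continuous fun δ : ℝ => x + δ • v := by fun_prop
  have hnear : ∀ᶠ δ in nhdsWithin (0 : ℝ) {0}ᶜ, x + δ • v ∈ U :=
    eventually_nhdsWithin_of_eventually_nhds
      (hcont.continuousAt.preimage_mem_nhds (by simpa using hU.mem_nhds hx))
  exact ((eventually_mem_nhdsWithin (a := (0 : ℝ)) (s := {0}ᶜ)).and hnear).exists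

section BasePoint

variable {σ : ℕ → ℝ → ℝ} {w : ℕ → ℕ} {L : ℕ} {β γ s t : ℕ → ℝ}

noncomputable def midpointParams (s t : ℕ → ℝ) : HiddenParams w L :=
  fun k => (0, fun _ => (s (k + 1) + t (k + 1)) / 2)

theorem midpointParams_mem_affineRegime (hst : ∀ i, 1 ≤ i → i ≤ L → s i < t i)
    (K : Set (Fin (w 0) → ℝ)) : (midpointParams s t : HiddenParams w L) ∈ affineRegime σ s t K := by
  intro x _ k i
  have := hst (k + 1) (by omega) k.isLt
  have hweight : weight (midpointParams s t : HiddenParams w L) k = 0 := rfl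
  simp only [preact, hweight, zero_mulVec, zero_add, midpointParams, mem_Ioo]
  constructor <;> linarith

/-- Weights `0` and biases at the midpoints of the affine intervals put every pre-activation
inside its interval; by openness this survives weights of some size `δ ≠ 0`, and the output
weight `(δ * S)⁻¹` then turns the row `δ • a₀` of `A₁` into the slope `a₀`. -/
theorem exists_mem_affineRegime_linSlope_eq (hσ : ∀ i, 1 ≤ i → i ≤ L + 1 → Continuous (σ i))
    (hst : ∀ i, 1 ≤ i → i ≤ L + 1 → s i < t i) (hβ : ∀ i, 1 ≤ i → i ≤ L + 1 → β i ≠ 0)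
    (hw : ∀ i, 1 ≤ i → i ≤ L + 1 → 0 < w i) {K : Set (Fin (w 0) → ℝ)} (hK : IsCompact K)
    (j₀ : Fin (w 1)) (a₀ : Fin (w 0) → ℝ) (c₀ : ℝ) :
    ∃ α : Params w (L + 1), α.1 ∈ affineRegime σ s t K ∧ linGain β α j₀ ≠ 0 ∧
      linSlope β α = a₀ ∧ linOffset β γ α = c₀ := by
  set θ₀ : HiddenParams w (L + 1) := midpointParams s t
  set θ₁ : HiddenParams w (L + 1) := fun k => (fun _ _ => if (k : ℕ) = 0 then 0 else 1, 0)
  obtain ⟨δ, hδ0, hδ⟩ := (isOpen_affineRegime hσ s t hK).exists_ne_zero_add_smul_mem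
    (midpointParams_mem_affineRegime hst K) (θ₁ + (pivotEmbed (L := L) j₀ (a₀, 0)).1)
  set S := ∑ i, linWeight β (θ₀ + δ • θ₁) L L.lt_succ_self i j₀
  have hS : S ≠ 0 := sum_linWeight_ne_zero hβ hw hδ0 (fun k hk a b => by
    simp only [θ₀, midpointParams, θ₁, Pi.add_apply, Pi.smul_apply, Prod.fst_add, Prod.smul_fst,
      if_neg hk, Pi.zero_apply, smul_eq_mul, mul_one, zero_add]) L _ j₀
  set α₁ : Params w (L + 1) := (θ₀ + δ • θ₁, (fun _ => (δ * S)⁻¹, 0))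
  have hgain : linGain β α₁ j₀ = δ⁻¹ := by
    calc linGain β α₁ j₀ = (δ * S)⁻¹ * S := (Finset.mul_sum Finset.univ
          (fun i => linWeight β (θ₀ + δ • θ₁) L L.lt_succ_self i j₀) (δ * S)⁻¹).symm
      _ = δ⁻¹ := by field_simp
  have hslope : linSlope β α₁ = 0 := by
    have hA₁ : weight (θ₀ + δ • θ₁) ⟨0, L.succ_pos⟩ = 0 := by
      ext a b
      show (0 : ℝ) + δ * (if (0 : ℕ) = 0 then 0 else 1) = 0
      simp
    change linGain β α₁ ᵥ* weight (θ₀ + δ • θ₁) ⟨0, L.succ_pos⟩ = 0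
    rw [hA₁, Matrix.vecMul_zero]
  refine ⟨α₁ + pivotEmbed j₀ (δ • a₀, c₀ - linOffset β γ α₁), ?_, ?_, ?_, ?_⟩
  · have hrow : (pivotEmbed j₀ (δ • a₀, 0)).1 = δ • (pivotEmbed (L := L) j₀ (a₀, 0)).1 := by
      rw [← Prod.smul_fst, ← map_smul, Prod.smul_mk, smul_zero]
    show θ₀ + δ • θ₁ + (pivotEmbed j₀ (δ • a₀, 0)).1 ∈ _
    rwa [hrow, add_assoc, ← smul_add]
  · rw [linGain_add_pivotEmbed, hgain]
    exact inv_ne_zero hδ0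
  · rw [linSlope_add_pivotEmbed, hslope, hgain, zero_add, inv_smul_smul₀ hδ0]
  · rw [linOffset_add_pivotEmbed, add_sub_cancel]

end BasePoint

theorem finrank_params (w : ℕ → ℕ) (L : ℕ) : finrank ℝ (Params w L) = mdim w L := by
  simp [mdim, Module.finrank_prod, Module.finrank_pi_fintype, Fin.sum_univ_eq_sum_range
    (fun i => w (i + 1) * w i + w (i + 1)), mul_add]

theorem localMin_of_eq_affineCM_near {n : ℕ} {K : Set (Fin n → ℝ)} {X : Type*}
    [PseudoMetricSpace X] (𝓛 : C(K, ℝ) → C(K, ℝ) → ℝ) (yT : C(K, ℝ)) {f : X → C(K, ℝ)}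
    {U : Set X} (hU : IsOpen U) (hfU : ∀ β ∈ U, ∃ a c, f β = affineCM K a c) {α : X}
    (hα : α ∈ U) {a₀ : Fin n → ℝ} {c₀ : ℝ} (hfα : f α = affineCM K a₀ c₀)
    (hmin : ∀ a c, 𝓛 (affineCM K a₀ c₀) yT ≤ 𝓛 (affineCM K a c) yT) :
    (∃ r > (0 : ℝ), ∀ β ∈ Metric.ball α r, 𝓛 (f α) yT ≤ 𝓛 (f β) yT) ∧
      ((∀ a c, 𝓛 (f α) yT ≤ 𝓛 (affineCM K a c) yT) ∧
        ∃ a c, 𝓛 (f α) yT = 𝓛 (affineCM K a c) yT) := by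
  obtain ⟨r, hr, hball⟩ := Metric.isOpen_iff.mp hU α hα
  refine ⟨⟨r, hr, fun β hβ => ?_⟩, hfα ▸ hmin, a₀, c₀, by rw [hfα]⟩
  obtain ⟨a, c, hβ⟩ := hfU β (hball hβ)
  rw [hfα, hβ]
  exact hmin a c

theorem local_minima_from_nonconstant_affine_segments_general
    (w : ℕ → ℕ) (L : ℕ) (hL : 0 < L) (hw : ∀ i, 1 ≤ i → i ≤ L → 0 < w i)
    (σ : ℕ → ℝ → ℝ)
    (hσ : ∀ i, 1 ≤ i → i ≤ L → Continuous (σ i))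
    (K : Set (Fin (w 0) → ℝ)) (hKc : IsCompact K)
    (𝓛 : C(K, ℝ) → C(K, ℝ) → ℝ) (yT : C(K, ℝ))
    -- each activation is affine and nonconstant on a nonempty open interval
    (haff : ∀ i, 1 ≤ i → i ≤ L → ∃ s t β γ : ℝ, s < t ∧ β ≠ 0 ∧
      ∀ x ∈ Set.Ioo s t, σ i x = β * x + γ)
    -- existence of an affine best approximation
    (hmin : ∃ (a₀ : Fin (w 0) → ℝ) (c₀ : ℝ), ∀ (a : Fin (w 0) → ℝ) (c : ℝ),
      𝓛 (affineCM K a₀ c₀) yT ≤ 𝓛 (affineCM K a c) yT) :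
    ∃ E : Set (Params w L),
      (↑(mdim w L - w 0 - 1) : ℝ≥0∞) ≤ dimH E ∧
      ∀ α ∈ E,
        -- `α` is a local minimum of (P)
        (∃ r > (0 : ℝ), ∀ β ∈ Metric.ball α r,
          𝓛 (Psi σ w L hσ K α) yT ≤ 𝓛 (Psi σ w L hσ K β) yT) ∧
        -- the loss value at `α` equals `min_{(a,c)} 𝓛(z_{a,c}, y_T)`
        ((∀ (a : Fin (w 0) → ℝ) (c : ℝ),
            𝓛 (Psi σ w L hσ K α) yT ≤ 𝓛 (affineCM K a c) yT) ∧
          ∃ (a : Fin (w 0) → ℝ) (c : ℝ),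
            𝓛 (Psi σ w L hσ K α) yT = 𝓛 (affineCM K a c) yT) := by
  obtain ⟨L, rfl⟩ : ∃ L', L = L' + 1 := ⟨L - 1, by omega⟩
  obtain ⟨a₀, c₀, hmin⟩ := hmin
  choose! s t β γ hst hβ hσ_aff using haff
  let j₀ : Fin (w 1) := ⟨0, hw 1 le_rfl (by omega)⟩
  obtain ⟨α₀, hα₀, hgain, hslope, hoffset⟩ :=
    exists_mem_affineRegime_linSlope_eq (γ := γ) hσ hst hβ hw hKc j₀ a₀ c₀
  let fit : Params w (L + 1) → Params w (L + 1) :=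
    fun α => α + pivotEmbed j₀ (pivotCorrection β γ j₀ a₀ c₀ α)
  have hregime : IsOpen {α : Params w (L + 1) | α.1 ∈ affineRegime σ s t K} :=
    (isOpen_affineRegime hσ s t hKc).preimage continuous_fst
  let O := {α | linGain β α j₀ ≠ 0} ∩ fit ⁻¹' {α | α.1 ∈ affineRegime σ s t K}
  have hO : IsOpen O := (continuousOn_add_pivotCorrection j₀ a₀ c₀).isOpen_inter_preimage
    (isOpen_ne_fun (continuous_linGain j₀) continuous_const) hregime
  have hfit₀ : fit α₀ = α₀ := by simp [fit, pivotCorrection, hslope, hoffset, Prod.mk_zero_zero]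
  refine ⟨fit '' O, ?_, ?_⟩
  · have := finrank_sub_finrank_le_dimH_image_add (pivotCoords j₀) (pivotEmbed j₀)
      (pivotCoords_pivotEmbed j₀) hO ⟨α₀, hgain, by simpa [hfit₀] using hα₀⟩
      (pivotCorrection β γ j₀ a₀ c₀)
    rwa [finrank_params, Module.finrank_prod, Module.finrank_fin_fun, Module.finrank_self,
      ← Nat.sub_sub] at this
  · rintro _ ⟨α, ⟨hα, hfitα⟩, rfl⟩
    refine localMin_of_eq_affineCM_near 𝓛 yT hregime (fun α' hα' => ⟨_, _, Psi_eq_affineCM hσ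
      hσ_aff hα'⟩) hfitα ?_ hmin
    rw [Psi_eq_affineCM hσ hσ_aff hfitα, linSlope_add_pivotCorrection a₀ c₀ hα,
      linOffset_add_pivotCorrection]

/-- **Lemma 4.4.** If every activation function is continuous and affine and
nonconstant on some nonempty open interval and an affine best approximation of `y_T`
with respect to `𝓛` exists, then there is a set `E ⊆ D` of Hausdorff dimension at
least `m - d - 1` all of whose elements are local minima of the training problem (P)
with loss value equal to `min_{(a,c)} 𝓛(z_{a,c}, y_T)`. -/
theorem local_minima_from_nonconstant_affine_segments
    (w : ℕ → ℕ) (L : ℕ) (hL : 0 < L) (hw0 : 0 < w 0) (hw : ∀ i, 1 ≤ i → i ≤ L → 0 < w i)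
    (σ : ℕ → ℝ → ℝ)
    (hσ : ∀ i, 1 ≤ i → i ≤ L → Continuous (σ i))
    (K : Set (Fin (w 0) → ℝ)) (hKne : K.Nonempty) (hKc : IsCompact K)
    (𝓛 : C(K, ℝ) → C(K, ℝ) → ℝ) (yT : C(K, ℝ))
    -- each activation is affine and nonconstant on a nonempty open interval
    (haff : ∀ i, 1 ≤ i → i ≤ L → ∃ s t β γ : ℝ, s < t ∧ β ≠ 0 ∧
      ∀ x ∈ Set.Ioo s t, σ i x = β * x + γ)
    -- existence of an affine best approximation
    (hmin : ∃ (a₀ : Fin (w 0) → ℝ) (c₀ : ℝ), ∀ (a : Fin (w 0) → ℝ) (c : ℝ),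
      𝓛 (affineCM K a₀ c₀) yT ≤ 𝓛 (affineCM K a c) yT) :
    ∃ E : Set (Params w L),
      (↑(mdim w L - w 0 - 1) : ℝ≥0∞) ≤ dimH E ∧
      ∀ α ∈ E,
        -- `α` is a local minimum of (P)
        (∃ r > (0 : ℝ), ∀ β ∈ Metric.ball α r,
          𝓛 (Psi σ w L hσ K α) yT ≤ 𝓛 (Psi σ w L hσ K β) yT) ∧
        -- the loss value at `α` equals `min_{(a,c)} 𝓛(z_{a,c}, y_T)`
        ((∀ (a : Fin (w 0) → ℝ) (c : ℝ),
            𝓛 (Psi σ w L hσ K α) yT ≤ 𝓛 (affineCM K a c) yT) ∧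
          ∃ (a : Fin (w 0) → ℝ) (c : ℝ),
            𝓛 (Psi σ w L hσ K α) yT = 𝓛 (affineCM K a c) yT) :=
  local_minima_from_nonconstant_affine_segments_general w L hL hw σ hσ K hKc 𝓛 yT haff hmin
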